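/- In the onion graph On(a,l,b) with l ≥ 2 and a ≥ b + 1, set G_1 = On(a-1,l,b), and let v be the cycle vertex carrying a-1 pendants and u_l the path endpoint carrying b pendants. Then t_{G_1}(u_l) - t_{G_1}(v) = l(a-b) + (a-b) - 2 > 0. -/
import Mathlib


/-- The Wiener index of a graph: the sum of distances over all unordered pairs of vertices. -/
noncomputable def wienerIndex {V : Type*} [Fintype V] (G : SimpleGraph V) : ℕ :=
  (∑ u : V, ∑ v : V, G.dist u v) / 2

/-- The transmission of a vertex: the sum of distances from it to all other vertices. -/
noncomputable def transmission {V : Type*} [Fintype V] (G : SimpleGraph V) (x : V) : ℕ :=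
  ∑ u : V, G.dist x u

/-- The onion graph `On(k,l,m)`: a 4-cycle with antipodal vertices `u, v`,
`k` pendant edges attached at `v`, a path on `l` vertices one of whose endpoints
is identified with `u`, and `m` pendant edges attached to the other endpoint of
the path.  Vertices: `Sum.inl 0 = v`, `Sum.inl 1, Sum.inl 2` the two other cycle
vertices, `Sum.inr (Sum.inl i)` the path vertices (with `u` the path vertex `0`
and `u_l` the path vertex `l-1`), `Sum.inr (Sum.inr (Sum.inl _))` the `k`
pendants at `v`, and `Sum.inr (Sum.inr (Sum.inr _))` the `m` pendants at `u_l`. -/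
def onionGraph (k l m : ℕ) : SimpleGraph (Fin 3 ⊕ Fin l ⊕ Fin k ⊕ Fin m) :=
  SimpleGraph.fromRel (fun a b =>
    match a, b with
    | Sum.inl i, Sum.inl j => i = 0 ∧ j ≠ 0
    | Sum.inl i, Sum.inr (Sum.inl p) => i ≠ 0 ∧ (p : ℕ) = 0
    | Sum.inl i, Sum.inr (Sum.inr (Sum.inl _)) => i = 0
    | Sum.inr (Sum.inl p), Sum.inr (Sum.inl q) => (p : ℕ) + 1 = (q : ℕ)
    | Sum.inr (Sum.inl p), Sum.inr (Sum.inr (Sum.inr _)) => (p : ℕ) = l - 1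
    | _, _ => False)

open SimpleGraph

variable {k l m : ℕ}

lemma adj01 : (onionGraph k l m).Adj (Sum.inl 0) (Sum.inl 1) := by
  rw [onionGraph, SimpleGraph.fromRel_adj]
  refine ⟨by simp, Or.inl ⟨rfl, by decide⟩⟩

lemma adj1u (h : 0 < l) : (onionGraph k l m).Adj (Sum.inl 1) (Sum.inr (Sum.inl ⟨0, h⟩)) := by
  rw [onionGraph, SimpleGraph.fromRel_adj]
  exact ⟨by simp, Or.inl ⟨by decide, rfl⟩⟩

lemma adjvp (c : Fin k) : (onionGraph k l m).Adj (Sum.inl 0) (Sum.inr (Sum.inr (Sum.inl c))) := by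
  rw [onionGraph, SimpleGraph.fromRel_adj]
  exact ⟨by simp, Or.inl rfl⟩

lemma adjpath {p q : ℕ} (hp : p < l) (hq : q < l) (h : p + 1 = q) :
    (onionGraph k l m).Adj (Sum.inr (Sum.inl ⟨p, hp⟩)) (Sum.inr (Sum.inl ⟨q, hq⟩)) := by
  rw [onionGraph, SimpleGraph.fromRel_adj]
  exact ⟨by simp [Sum.inr.injEq, Sum.inl.injEq, Fin.ext_iff]; omega, Or.inl h⟩

lemma adjlm (h : l - 1 < l) (c : Fin m) :
    (onionGraph k l m).Adj (Sum.inr (Sum.inl ⟨l - 1, h⟩)) (Sum.inr (Sum.inr (Sum.inr c))) := by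
  rw [onionGraph, SimpleGraph.fromRel_adj]
  exact ⟨by simp, Or.inl rfl⟩

lemma walk_seg (d : ℕ) : ∀ (p : ℕ) (h : p + d < l),
    ∃ w : (onionGraph k l m).Walk (Sum.inr (Sum.inl ⟨p, by omega⟩)) (Sum.inr (Sum.inl ⟨p + d, h⟩)),
      w.length = d := by
  induction d with
  | zero => intro p h; exact ⟨SimpleGraph.Walk.nil, rfl⟩
  | succ d ih =>
    intro p h
    obtain ⟨w, hw⟩ := ih (p + 1) (by omega)
    refine ⟨SimpleGraph.Walk.cons (adjpath (by omega) (by omega) rfl) (w.copy rfl (by simp only [Sum.inr.injEq, Sum.inl.injEq, Fin.mk.injEq]; omega)), ?_⟩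
    simp [hw]

def fv (l : ℕ) : Fin 3 ⊕ Fin l ⊕ Fin k ⊕ Fin m → ℕ
  | Sum.inl i => if i = 0 then 0 else 1
  | Sum.inr (Sum.inl p) => (p : ℕ) + 2
  | Sum.inr (Sum.inr (Sum.inl _)) => 1
  | Sum.inr (Sum.inr (Sum.inr _)) => l + 2

def fu (l : ℕ) : Fin 3 ⊕ Fin l ⊕ Fin k ⊕ Fin m → ℕ
  | Sum.inl i => if i = 0 then l + 1 else l
  | Sum.inr (Sum.inl p) => l - 1 - (p : ℕ)
  | Sum.inr (Sum.inr (Sum.inl _)) => l + 2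
  | Sum.inr (Sum.inr (Sum.inr _)) => 1

lemma fv_lip (hl : 2 ≤ l) : ∀ u v, (onionGraph k l m).Adj u v → fv (k := k) (m := m) l v ≤ fv l u + 1 := by
  intro u v h
  rw [onionGraph, SimpleGraph.fromRel_adj] at h
  obtain ⟨hne, h⟩ := h
  rcases u with i | ⟨p, hp⟩ | c | c <;> rcases v with j | ⟨q, hq⟩ | c' | c' <;>
    simp_all [fv] <;> first | omega | (split_ifs <;> omega)

lemma fu_lip (hl : 2 ≤ l) : ∀ u v, (onionGraph k l m).Adj u v → fu (k := k) (m := m) l v ≤ fu l u + 1 := by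
  intro u v h
  rw [onionGraph, SimpleGraph.fromRel_adj] at h
  obtain ⟨hne, h⟩ := h
  rcases u with i | ⟨p, hp⟩ | c | c <;> rcases v with j | ⟨q, hq⟩ | c' | c' <;>
    simp_all [fu] <;> first | omega | (split_ifs <;> omega)

open SimpleGraph

lemma potential_le {V : Type*} (G : SimpleGraph V) (f : V → ℕ)
    (hf : ∀ u v, G.Adj u v → f v ≤ f u + 1) :
    ∀ {x y : V} (w : G.Walk x y), f y ≤ f x + w.length := by
  intro x y w
  induction w with
  | nil => simp
  | cons h p ih =>
    have := hf _ _ h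
    simp only [SimpleGraph.Walk.length_cons]
    omega

lemma dist_eq_of_potential {V : Type*} (G : SimpleGraph V) (f : V → ℕ)
    (hf : ∀ u v, G.Adj u v → f v ≤ f u + 1) {x y : V} (hx : f x = 0)
    (w : G.Walk x y) (hw : w.length = f y) : G.dist x y = f y := by
  have h1 : G.dist x y ≤ f y := hw ▸ SimpleGraph.dist_le w
  obtain ⟨w', hw'⟩ := (SimpleGraph.Walk.reachable w).exists_walk_length_eq_dist
  have := potential_le G f hf w'
  omega
section scratch
open SimpleGraph Walk
variable {k l m : ℕ}

lemma adj0j (j : Fin 3) (hj : j ≠ 0) : (onionGraph k l m).Adj (Sum.inl 0) (Sum.inl j) := by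
  rw [onionGraph, SimpleGraph.fromRel_adj]
  exact ⟨by simp [hj.symm], Or.inl ⟨rfl, hj⟩⟩

lemma adjju (h : 0 < l) (j : Fin 3) (hj : j ≠ 0) :
    (onionGraph k l m).Adj (Sum.inl j) (Sum.inr (Sum.inl ⟨0, h⟩)) := by
  rw [onionGraph, SimpleGraph.fromRel_adj]
  exact ⟨by simp, Or.inl ⟨hj, rfl⟩⟩

lemma walk_between (p q : ℕ) (hpq : p ≤ q) (hq : q < l) :
    ∃ w : (onionGraph k l m).Walk (Sum.inr (Sum.inl ⟨p, by omega⟩)) (Sum.inr (Sum.inl ⟨q, hq⟩)),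
      w.length = q - p := by
  have harg : p + (q - p) < l := by omega
  obtain ⟨w, hw⟩ := walk_seg (k := k) (m := m) (q - p) p harg
  have he : (⟨p + (q - p), by omega⟩ : Fin l) = ⟨q, hq⟩ := by
    simp only [Fin.mk.injEq]; omega
  exact ⟨w.copy rfl (congrArg Sum.inr (congrArg Sum.inl he)), by simpa using hw⟩

lemma walk_v_path (hl : 2 ≤ l) (p : ℕ) (hp : p < l) :
    ∃ w : (onionGraph k l m).Walk (Sum.inl 0) (Sum.inr (Sum.inl ⟨p, hp⟩)), w.length = p + 2 := by
  obtain ⟨w, hw⟩ := walk_between (k := k) (m := m) 0 p (by omega) hp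
  refine ⟨.cons (adj0j 1 (by decide)) (.cons (adjju (by omega) 1 (by decide)) w), by simp [hw]⟩

lemma distv (hl : 2 ≤ l) (y) :
    (onionGraph k l m).dist (Sum.inl 0) y = fv (k := k) (m := m) l y := by
  obtain ⟨w, hw⟩ : ∃ w : (onionGraph k l m).Walk (Sum.inl 0) y, w.length = fv l y := by
    rcases y with j | ⟨p, hp⟩ | c | c
    · fin_cases j
      · exact ⟨.nil, by simp [fv]⟩
      · exact ⟨.cons (adj0j 1 (by decide)) .nil, by simp [fv]⟩
      · exact ⟨.cons (adj0j 2 (by decide)) .nil, by simp [fv]⟩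
    · obtain ⟨w, hw⟩ := walk_v_path (k := k) (m := m) hl p hp
      exact ⟨w, by simp [fv, hw]⟩
    · exact ⟨.cons (adjvp c) .nil, by simp [fv]⟩
    · obtain ⟨w, hw⟩ := walk_v_path (k := k) (m := m) hl (l - 1) (by omega)
      exact ⟨w.concat (adjlm (by omega) c), by simp [Walk.length_concat, fv, hw]; omega⟩
  exact dist_eq_of_potential _ _ (fv_lip hl) (by simp [fv]) w hw

lemma distu (hl : 2 ≤ l) (h : l - 1 < l) (y) :
    (onionGraph k l m).dist (Sum.inr (Sum.inl ⟨l - 1, h⟩)) y = fu (k := k) (m := m) l y := by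
  have hw0 : ∃ w : (onionGraph k l m).Walk (Sum.inr (Sum.inl ⟨l - 1, h⟩)) (Sum.inr (Sum.inl ⟨0, by omega⟩)),
      w.length = l - 1 := by
    obtain ⟨w, hw⟩ := walk_between (k := k) (m := m) 0 (l - 1) (by omega) h
    exact ⟨w.reverse, by simp [hw]⟩
  obtain ⟨w, hw⟩ : ∃ w : (onionGraph k l m).Walk (Sum.inr (Sum.inl ⟨l - 1, h⟩)) y, w.length = fu l y := by
    rcases y with j | ⟨p, hp⟩ | c | c
    · obtain ⟨w0, hw0⟩ := hw0
      fin_cases j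
      · exact ⟨(w0.concat (adjju (by omega) 1 (by decide)).symm).concat (adj0j 1 (by decide)).symm,
          by simp [Walk.length_concat, fu, hw0]; omega⟩
      · exact ⟨w0.concat (adjju (by omega) 1 (by decide)).symm,
          by simp [Walk.length_concat, fu, hw0]; omega⟩
      · exact ⟨w0.concat (adjju (by omega) 2 (by decide)).symm,
          by simp [Walk.length_concat, fu, hw0]; omega⟩
    · obtain ⟨w, hw⟩ := walk_between (k := k) (m := m) p (l - 1) (by omega) h
      exact ⟨(w.copy (by simp only [Sum.inr.injEq, Sum.inl.injEq, Fin.mk.injEq]) rfl).reverse,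
        by simp [hw, fu]⟩
    · obtain ⟨w0, hw0⟩ := hw0
      exact ⟨((w0.concat (adjju (by omega) 1 (by decide)).symm).concat (adj0j 1 (by decide)).symm).concat
          (adjvp c), by simp [Walk.length_concat, fu, hw0]; omega⟩
    · exact ⟨.cons (adjlm h c) .nil, by simp [fu]⟩
  exact dist_eq_of_potential _ _ (fu_lip hl) (by simp only [fu]; omega) w hw
end scratch
section scratch2
open SimpleGraph Walk
variable {k l m : ℕ}

lemma tv_eq (hl : 2 ≤ l) :
    transmission (onionGraph k l m) (Sum.inl 0) =
      (∑ i ∈ Finset.range l, i) + 2 * l + 2 + k + m * (l + 2) := by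
  unfold transmission
  simp_rw [distv hl]
  rw [Fintype.sum_sum_type, Fintype.sum_sum_type, Fintype.sum_sum_type]
  simp [fv, Fin.sum_univ_three, Finset.sum_add_distrib, Fin.sum_univ_eq_sum_range,
    Finset.sum_const, Finset.card_univ, mul_comm]
  rw [Fin.sum_univ_eq_sum_range (fun i => (i : ℕ)) l]
  ring

lemma tu_eq (hl : 2 ≤ l) (h : l - 1 < l) :
    transmission (onionGraph k l m) (Sum.inr (Sum.inl ⟨l - 1, h⟩)) =
      (∑ i ∈ Finset.range l, i) + 3 * l + 1 + k * (l + 2) + m := by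
  unfold transmission
  simp_rw [distu hl h]
  rw [Fintype.sum_sum_type, Fintype.sum_sum_type, Fintype.sum_sum_type]
  have hr : ∑ p : Fin l, (l - 1 - (p : ℕ)) = ∑ i ∈ Finset.range l, i := by
    rw [Fin.sum_univ_eq_sum_range]
    exact Finset.sum_range_reflect (fun i => i) l
  simp [fu, Fin.sum_univ_three, hr, Finset.sum_const, Finset.card_univ, mul_comm]
  omega

end scratch2

/-- in `G_1 = On(a-1, l, b)` with `l ≥ 2` and `a ≥ b + 1`, the
difference of the transmissions of the path endpoint `u_l` (carrying `b`
pendants) and the cycle vertex `v` (carrying `a-1` pendants) equals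
`l(a-b) + (a-b) - 2 > 0`. -/
theorem transmission_onion_diff (a b l : ℕ) (hl : 2 ≤ l) (hab : b + 1 ≤ a) :
    transmission (onionGraph (a - 1) l b) (Sum.inr (Sum.inl ⟨l - 1, by omega⟩)) -
        transmission (onionGraph (a - 1) l b) (Sum.inl 0) =
      l * (a - b) + (a - b) - 2 ∧
    transmission (onionGraph (a - 1) l b) (Sum.inl 0) <
      transmission (onionGraph (a - 1) l b) (Sum.inr (Sum.inl ⟨l - 1, by omega⟩)) := by
  obtain ⟨d, rfl⟩ : ∃ d, a = b + 1 + d := ⟨a - b - 1, by omega⟩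
  obtain ⟨l2, rfl⟩ : ∃ l2, l = l2 + 2 := ⟨l - 2, by omega⟩
  rw [tv_eq hl, tu_eq hl (by omega)]
  have e0 : b + 1 + d - b = d + 1 := by omega
  have e1 : (b + 1 + d - 1) * (l2 + 2 + 2) = b * (l2 + 2 + 2) + d * (l2 + 2 + 2) := by
    have : b + 1 + d - 1 = b + d := by omega
    rw [this]; ring
  rw [e0, e1, show b + 1 + d - 1 = b + d from by omega]
  set B := b * (l2 + 2 + 2) with hB
  set P := d * (l2 + 2 + 2) with hP
  set Q := (l2 + 2) * (d + 1) with hQ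
  have e5 : Q + 2 * d = P + l2 + 2 := by rw [hP, hQ]; ring
  have e6 : d ≤ P := by rw [hP]; exact Nat.le_mul_of_pos_right d (by omega)
  clear_value B P Q
  clear hB hP hQ e1 e0 hab
  generalize (∑ i ∈ Finset.range (l2 + 2), i) = S
  constructor <;> omega
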